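/- arXiv:2001.05104 — 2 statements merged into one kernel-verified Lean document; each statement's English description precedes it below -/
import Mathlib

section
/- Let R = ℚ[x] and work in the formal power series ring R[[t]], where 1 − 2xt is a unit. For any integer α ∈ ℤ, any c(t) ∈ R[[t]], and any natural number β, the coefficient of t^β in (1 − 2xt)^α · c(t/(1 − 2xt)) equals the coefficient of t^β in (1 + 2xt)^{β − α − 1} · c(t), where negative integer powers of units are interpreted via inverses, and substitution c(t/(1−2xt)) means composing c with the power series t·(1−2xt)^{−1} (which has zero constant term). -/
open PowerSeries

noncomputable def substitute {R : Type*} [CommRing R] (a c : PowerSeries R) : PowerSeries R :=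
  PowerSeries.mk fun n => ∑ k ∈ Finset.range (n + 1), (coeff (R := R) k c) * (coeff (R := R) n (a ^ k))

/-- Generalized binomial coefficient `γ.choose m` as a rational. -/
def cc (γ : ℤ) (m : ℕ) : ℚ :=
  (∏ i ∈ Finset.range m, ((γ : ℚ) - i)) / m.factorial

lemma cc_zero_right (γ : ℤ) : cc γ 0 = 1 := by simp [cc]

lemma cc_pascal (γ : ℤ) (m : ℕ) : cc (γ + 1) (m + 1) = cc γ (m + 1) + cc γ m := by
  unfold cc
  rw [Finset.prod_range_succ', Finset.prod_range_succ]
  have h1 : ∀ i ∈ Finset.range m, (((γ + 1 : ℤ) : ℚ) - ((i + 1 : ℕ) : ℚ)) = ((γ : ℚ) - i) := by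
    intro i _; push_cast; ring
  rw [Finset.prod_congr rfl h1]
  have h2 : (((m + 1).factorial : ℚ)) = ((m : ℚ) + 1) * m.factorial := by
    rw [Nat.factorial_succ]; push_cast; ring
  have h3 : ((m.factorial : ℚ)) ≠ 0 := Nat.cast_ne_zero.2 (Nat.factorial_ne_zero m)
  have h4 : ((m : ℚ) + 1) ≠ 0 := by positivity
  rw [h2]
  field_simp
  push_cast
  ring

lemma cc_reflect (γ : ℤ) (m : ℕ) : cc ((m : ℤ) - 1 - γ) m = (-1) ^ m * cc γ m := by
  unfold cc
  rcases m with _ | n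
  · simp
  have key : (∏ i ∈ Finset.range (n + 1), (((((n + 1 : ℕ) : ℤ) - 1 - γ : ℤ) : ℚ) - (i : ℚ)))
      = (-1) ^ (n + 1) * ∏ i ∈ Finset.range (n + 1), ((γ : ℚ) - (i : ℚ)) := by
    have step : ∀ i ∈ Finset.range (n + 1),
        (((((n + 1 : ℕ) : ℤ) - 1 - γ : ℤ) : ℚ) - (i : ℚ))
          = (-1) * ((fun j : ℕ => ((γ : ℚ) - (j : ℚ))) (n + 1 - 1 - i)) := by
      intro i hi
      have hi' : i ≤ n := Nat.lt_succ_iff.mp (Finset.mem_range.mp hi)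
      have h5 : ((n + 1 - 1 - i : ℕ) : ℚ) = (n : ℚ) - i := by
        simp only [Nat.add_sub_cancel]
        push_cast [Nat.cast_sub hi']
        ring
      simp only [h5]
      push_cast
      ring
    rw [Finset.prod_congr rfl step, Finset.prod_mul_distrib, Finset.prod_const,
      Finset.prod_range_reflect (fun j : ℕ => ((γ : ℚ) - (j : ℚ))) (n + 1)]
    simp
  rw [key]
  ring

section UnitCoeff

variable {R : Type*} [CommRing R] [Algebra ℚ R]

lemma coeff_unit_zpow (a : R) (u : (PowerSeries R)ˣ)
    (hu : (u : PowerSeries R) = 1 - PowerSeries.C (R := R) a * PowerSeries.X) (γ : ℤ) :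
    ∀ m : ℕ, coeff (R := R) m ((u ^ γ : (PowerSeries R)ˣ) : PowerSeries R)
      = algebraMap ℚ R (cc γ m) * (-a) ^ m := by
  have h0 : ∀ δ : ℤ, coeff (R := R) 0 ((u ^ δ : (PowerSeries R)ˣ) : PowerSeries R) = 1 := by
    intro δ
    have h1 : Units.map (constantCoeff (R := R) : R⟦X⟧ →+* R).toMonoidHom u = 1 := by
      ext
      simp [hu]
    have h2 : constantCoeff (R := R) ((u ^ δ : (PowerSeries R)ˣ) : PowerSeries R)
        = ((Units.map (constantCoeff (R := R) : R⟦X⟧ →+* R).toMonoidHom (u ^ δ) : Rˣ) : R) := rfl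
    rw [coeff_zero_eq_constantCoeff, h2, map_zpow, h1, one_zpow, Units.val_one]
  have hrec : ∀ (δ : ℤ) (n : ℕ),
      coeff (R := R) (n + 1) ((u ^ (δ + 1) : (PowerSeries R)ˣ) : PowerSeries R)
        = coeff (R := R) (n + 1) ((u ^ δ : (PowerSeries R)ˣ) : PowerSeries R)
          - a * coeff (R := R) n ((u ^ δ : (PowerSeries R)ˣ) : PowerSeries R) := by
    intro δ n
    have h1 : ((u ^ (δ + 1) : (PowerSeries R)ˣ) : PowerSeries R)
        = ((u ^ δ : (PowerSeries R)ˣ) : PowerSeries R)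
          - PowerSeries.C (R := R) a * (((u ^ δ : (PowerSeries R)ˣ) : PowerSeries R) * PowerSeries.X) := by
      rw [zpow_add_one, Units.val_mul, hu]
      ring
    rw [h1, map_sub, coeff_C_mul, coeff_succ_mul_X]
  induction γ using Int.induction_on with
  | zero =>
    intro m
    rcases m with _ | n
    · rw [h0]; simp [cc_zero_right]
    · have : cc 0 (n + 1) = 0 := by
        unfold cc
        rw [Finset.prod_eq_zero (Finset.mem_range.mpr (Nat.succ_pos n))]
        · simp
        · simp
      rw [this, zpow_zero, Units.val_one]
      simp
  | succ k ih =>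
    intro m
    rcases m with _ | n
    · rw [h0]; simp [cc_zero_right]
    · rw [hrec, ih (n + 1), ih n, cc_pascal, map_add]
      ring
  | pred k ih =>
    intro m
    induction m with
    | zero => rw [h0]; simp [cc_zero_right]
    | succ n ihm =>
      have hr := hrec (-(k : ℤ) - 1) n
      have he : (-(k : ℤ) - 1) + 1 = -(k : ℤ) := by ring
      rw [he] at hr
      have : coeff (R := R) (n + 1) ((u ^ (-(k : ℤ) - 1) : (PowerSeries R)ˣ) : PowerSeries R)
          = coeff (R := R) (n + 1) ((u ^ (-(k : ℤ)) : (PowerSeries R)ˣ) : PowerSeries R)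
            + a * coeff (R := R) n ((u ^ (-(k : ℤ) - 1) : (PowerSeries R)ˣ) : PowerSeries R) := by
        rw [hr]; ring
      rw [this, ih (n + 1), ihm]
      have hp := cc_pascal (-(k : ℤ) - 1) n
      rw [he] at hp
      have : cc (-(k : ℤ) - 1) (n + 1) = cc (-(k : ℤ)) (n + 1) - cc (-(k : ℤ) - 1) n := by
        rw [hp]; ring
      rw [this, map_sub]
      ring

end UnitCoeff

lemma core_coeff (u v : (PowerSeries (Polynomial ℚ))ˣ)
    (hu : (u : PowerSeries (Polynomial ℚ)) =
      1 - 2 * PowerSeries.C (R := Polynomial ℚ) Polynomial.X * PowerSeries.X)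
    (hv : (v : PowerSeries (Polynomial ℚ)) =
      1 + 2 * PowerSeries.C (R := Polynomial ℚ) Polynomial.X * PowerSeries.X)
    (γ δ : ℤ) (m : ℕ) (h : γ + δ = (m : ℤ) - 1) :
    coeff (R := Polynomial ℚ) m ((u ^ γ : (PowerSeries (Polynomial ℚ))ˣ) : PowerSeries (Polynomial ℚ))
      = coeff (R := Polynomial ℚ) m ((v ^ δ : (PowerSeries (Polynomial ℚ))ˣ) :
          PowerSeries (Polynomial ℚ)) := by
  have hu' : (u : PowerSeries (Polynomial ℚ))
      = 1 - PowerSeries.C (R := Polynomial ℚ) (2 * Polynomial.X) * PowerSeries.X := by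
    rw [hu, map_mul, map_ofNat]
  have hv' : (v : PowerSeries (Polynomial ℚ))
      = 1 - PowerSeries.C (R := Polynomial ℚ) (-(2 * Polynomial.X)) * PowerSeries.X := by
    rw [hv, map_neg, map_mul, map_ofNat]
    ring
  rw [coeff_unit_zpow _ u hu' γ m, coeff_unit_zpow _ v hv' δ m, neg_neg]
  have hδ : δ = (m : ℤ) - 1 - γ := by omega
  rw [hδ, cc_reflect, map_mul, map_pow, map_neg, map_one, neg_pow]
  ring

/-- Coefficient-extraction lemma (ACGH VIII): in `R⟦t⟧` with `R = ℚ[x]`, for any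
`α : ℤ`, `c ∈ R⟦t⟧` and `β : ℕ`,
`[t^β] (1 − 2xt)^α · c(t/(1 − 2xt)) = [t^β] (1 + 2xt)^{β − α − 1} · c`,
where `1 − 2xt` and `1 + 2xt` are the units `u`, `v` and negative powers are
interpreted via inverses. -/
theorem coeff_extraction_lemma (α : ℤ) (β : ℕ) (c : PowerSeries (Polynomial ℚ))
    (u v : (PowerSeries (Polynomial ℚ))ˣ)
    (hu : (u : PowerSeries (Polynomial ℚ)) =
      1 - 2 * PowerSeries.C (R := Polynomial ℚ) Polynomial.X * PowerSeries.X)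
    (hv : (v : PowerSeries (Polynomial ℚ)) =
      1 + 2 * PowerSeries.C (R := Polynomial ℚ) Polynomial.X * PowerSeries.X) :
    (coeff (R := Polynomial ℚ) β) ((↑(u ^ α) : PowerSeries (Polynomial ℚ)) *
        substitute (PowerSeries.X * (↑u⁻¹ : PowerSeries (Polynomial ℚ))) c) =
      (coeff (R := Polynomial ℚ) β) ((↑(v ^ ((β : ℤ) - α - 1)) : PowerSeries (Polynomial ℚ)) * c) := by
  have hL : coeff (R := Polynomial ℚ) β ((↑(u ^ α) : PowerSeries (Polynomial ℚ)) *
        substitute (PowerSeries.X * (↑u⁻¹ : PowerSeries (Polynomial ℚ))) c)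
      = ∑ k ∈ Finset.range (β + 1), coeff (R := Polynomial ℚ) k c *
          coeff (R := Polynomial ℚ) β ((↑(u ^ α) : PowerSeries (Polynomial ℚ)) *
            (PowerSeries.X * (↑u⁻¹ : PowerSeries (Polynomial ℚ))) ^ k) := by
    rw [coeff_mul]
    have hsub : ∀ p ∈ Finset.HasAntidiagonal.antidiagonal β,
        coeff (R := Polynomial ℚ) p.1 (↑(u ^ α) : PowerSeries (Polynomial ℚ)) *
            coeff (R := Polynomial ℚ) p.2
              (substitute (PowerSeries.X * (↑u⁻¹ : PowerSeries (Polynomial ℚ))) c)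
          = ∑ k ∈ Finset.range (β + 1),
              coeff (R := Polynomial ℚ) k c *
                (coeff (R := Polynomial ℚ) p.1 (↑(u ^ α) : PowerSeries (Polynomial ℚ)) *
                  coeff (R := Polynomial ℚ) p.2
                    ((PowerSeries.X * (↑u⁻¹ : PowerSeries (Polynomial ℚ))) ^ k)) := by
      intro p hp
      have hp2 : p.2 ≤ β := by
        have := Finset.HasAntidiagonal.mem_antidiagonal.mp hp; omega
      have hcoeff : coeff (R := Polynomial ℚ) p.2
          (substitute (PowerSeries.X * (↑u⁻¹ : PowerSeries (Polynomial ℚ))) c)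
          = ∑ k ∈ Finset.range (β + 1),
              coeff (R := Polynomial ℚ) k c *
                coeff (R := Polynomial ℚ) p.2
                  ((PowerSeries.X * (↑u⁻¹ : PowerSeries (Polynomial ℚ))) ^ k) := by
        rw [substitute, coeff_mk]
        apply Finset.sum_subset (Finset.range_subset_range.mpr (by omega))
        intro k hk hk2
        have hk3 : p.2 < k := by
          simp only [Finset.mem_range] at hk hk2; omega
        rw [mul_pow, coeff_X_pow_mul', if_neg (by omega), mul_zero]
      rw [hcoeff, Finset.mul_sum]
      exact Finset.sum_congr rfl fun k _ => by ring
    rw [Finset.sum_congr rfl hsub, Finset.sum_comm]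
    refine Finset.sum_congr rfl fun k _ => ?_
    rw [← Finset.mul_sum, coeff_mul]
  have hR : coeff (R := Polynomial ℚ) β
        ((↑(v ^ ((β : ℤ) - α - 1)) : PowerSeries (Polynomial ℚ)) * c)
      = ∑ k ∈ Finset.range (β + 1), coeff (R := Polynomial ℚ) k c *
          coeff (R := Polynomial ℚ) (β - k)
            (↑(v ^ ((β : ℤ) - α - 1)) : PowerSeries (Polynomial ℚ)) := by
    rw [mul_comm, coeff_mul, Finset.Nat.sum_antidiagonal_eq_sum_range_succ_mk]
  rw [hL, hR]
  refine Finset.sum_congr rfl fun k hk => ?_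
  have hkβ : k ≤ β := Nat.lt_succ_iff.mp (Finset.mem_range.mp hk)
  have h1 : (PowerSeries.X * (↑u⁻¹ : PowerSeries (Polynomial ℚ))) ^ k
      = PowerSeries.X ^ k * ((u⁻¹ ^ k : (PowerSeries (Polynomial ℚ))ˣ) :
          PowerSeries (Polynomial ℚ)) := by
    rw [mul_pow, Units.val_pow_eq_pow_val]
  have h2 : u ^ α * u⁻¹ ^ k = u ^ (α - (k : ℤ)) := by
    group
  have h3 : (↑(u ^ α) : PowerSeries (Polynomial ℚ)) *
        (PowerSeries.X * (↑u⁻¹ : PowerSeries (Polynomial ℚ))) ^ k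
      = PowerSeries.X ^ k * ((u ^ (α - (k : ℤ)) : (PowerSeries (Polynomial ℚ))ˣ) :
          PowerSeries (Polynomial ℚ)) := by
    rw [h1, ← h2, Units.val_mul]
    ring
  rw [h3, coeff_X_pow_mul', if_pos hkβ]
  congr 1
  apply core_coeff u v hu hv
  have : ((β - k : ℕ) : ℤ) = (β : ℤ) - k := by
    push_cast [Nat.cast_sub hkβ]; ring
  omega
end

section
/- Define the map from partitions of a to integer sequences by sending a partition λ (with Young diagram Y) to the sequence s(n) = (length of the n-th diagonal of Y), i.e., s(n) = #{(i,j) ∈ Y : j − i = n} for n ∈ ℤ, where Y = {(i,j) : 1 ≤ i ≤ number of parts, 1 ≤ j ≤ λ_i}. Then s is 1-admissible with ∑_n s(n) = a, i.e., s(n+1) ∈ {s(n), s(n)−1} and s(−n−1) ∈ {s(−n), s(−n)−1} for all n ≥ 0, and the total sum of diagonal lengths equals a. -/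
/-- `s` is 1-admissible: away from index 0 in each direction, consecutive values
drop by 0 or 1 (truncated subtraction on ℕ). -/
def IsOneAdmissible (s : ℤ → ℕ) : Prop :=
  ∀ n : ℕ, (s ((n : ℤ) + 1) = s n ∨ s ((n : ℤ) + 1) = s n - 1) ∧
    (s (-(n : ℤ) - 1) = s (-(n : ℤ)) ∨ s (-(n : ℤ) - 1) = s (-(n : ℤ)) - 1)

/-- The sequence of diagonal lengths of the Young diagram of a partition `λ`:
`s(n) = #{(i, j) ∈ Y : j − i = n}` where
`Y = {(i, j) : 1 ≤ i ≤ number of parts, 1 ≤ j ≤ λᵢ}` and the parts `λᵢ` are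
listed in weakly decreasing order.  Row `i` (1-indexed) contributes to
diagonal `n` iff `1 ≤ n + i ≤ λᵢ`. -/
noncomputable def diagSeq {a : ℕ} (P : Nat.Partition a) : ℤ → ℕ := fun n =>
  ((Finset.range ((P.parts.sort (· ≤ ·)).reverse.length)).filter (fun (i : ℕ) =>
      1 ≤ n + ((i : ℤ) + 1) ∧
        n + ((i : ℤ) + 1) ≤ (((P.parts.sort (· ≤ ·)).reverse.getD i 0 : ℕ) : ℤ))).card
/-!
Row `i` (counted from `0`) of the Young diagram occupies the diagonals `-i ≤ n < λᵢ - i`, so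
summing the diagonal lengths counts every box once. The right ends `λᵢ - i` are strictly
decreasing, hence as `n` grows by one at most one row stops reaching diagonal `n`. Every row
`i ≥ -n` reaching diagonal `n` has a box on it, while each of the rows `i < -n` reaches it
without meeting it; so `s(n) + min(-n, ℓ(λ))` is the number of rows reaching `n`, and both
admissibility conditions follow from the one-step drop of that count.
-/

open Finset

lemma Finset.card_filter_lt_eq_card_filter_succ_lt_add {α : Type*} (s : Finset α) (f : α → ℤ)
    (n : ℤ) : #{i ∈ s | n < f i} = #{i ∈ s | n + 1 < f i} + #{i ∈ s | f i = n + 1} := by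
  rw [← card_filter_add_card_filter_not (s := {i ∈ s | n < f i}) (fun i => n + 1 < f i),
    filter_filter, filter_filter]
  congr 2 <;> exact filter_congr fun i _ => by omega

lemma Finset.card_filter_eq_le_one {α : Type*} {s : Finset α} {f : α → ℤ}
    (hf : Set.InjOn f s) (c : ℤ) : #{i ∈ s | f i = c} ≤ 1 :=
  card_le_one.2 fun i hi j hj => by
    rw [mem_filter] at hi hj
    exact hf hi.1 hj.1 (hi.2.trans hj.2.symm)

lemma finsum_card_filter_mem {ι α : Type*} [DecidableEq α] (s : Finset ι)
    (I : ι → Finset α) :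
    ∑ᶠ x, #{i ∈ s | x ∈ I i} = ∑ i ∈ s, #(I i) := by
  have hsupp (i : ι) : Function.support (fun x => if x ∈ I i then 1 else 0) ⊆ I i :=
    fun _ hx => by_contra fun h => hx (if_neg h)
  simp_rw [card_filter]
  rw [finsum_sum_comm _ _ fun i _ => (I i).finite_toSet.subset (hsupp i)]
  refine sum_congr rfl fun i _ => ?_
  rw [finsum_eq_sum_of_support_subset _ (hsupp i), sum_boole, filter_mem_eq_inter, inter_self,
    Nat.cast_id]

lemma AntitoneOn.strictAntiOn_sub_self {s : Set ℕ} {r : ℕ → ℕ} (hr : AntitoneOn r s) :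
    StrictAntiOn (fun i => (r i : ℤ) - i) s := fun i hi j hj hij => by
  have := hr hi hj hij.le
  dsimp only
  omega

lemma List.SortedGE.antitoneOn_getD {α : Type*} [Preorder α] {L : List α} (hL : L.SortedGE)
    (d : α) : AntitoneOn (fun i => L.getD i d) (Set.Iio L.length) := fun i hi j hj hij => by
  simp only [List.getD_eq_getElem _ _ hi, List.getD_eq_getElem _ _ hj]
  exact List.sortedGE_iff_getElem_ge_getElem_of_le.1 hL hij

lemma List.sum_range_getD {M : Type*} [AddCommMonoid M] (L : List M) :
    ∑ i ∈ Finset.range L.length, L.getD i 0 = L.sum := by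
  rw [Finset.sum_range, ← Fin.sum_univ_getElem]
  simp only [Fin.is_lt, List.getD_eq_getElem]

section DiagonalCount

variable (k : ℕ) (r : ℕ → ℕ)

def diagCount (n : ℤ) : ℕ :=
  #{i ∈ range k | 1 ≤ n + (((i : ℕ) : ℤ) + 1) ∧ n + ((i : ℤ) + 1) ≤ (r i : ℤ)}

def rowsReaching (n : ℤ) : ℕ :=
  #{i ∈ range k | n < (r i : ℤ) - (i : ℕ)}

variable {k r}

lemma diagCount_add_min_eq_rowsReaching (hpos : ∀ i < k, 0 < r i) (n : ℤ) :
    diagCount k r n + min (-n).toNat k = rowsReaching k r n := by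
  rw [rowsReaching, ← card_filter_add_card_filter_not (s := {i ∈ range k | n < (r i : ℤ) - i})
    (fun i => -n ≤ i), filter_filter, filter_filter, diagCount]
  congr 1
  · congr 1
    exact filter_congr fun i hi => by
      have := hpos i (mem_range.1 hi)
      constructor <;> intro <;> omega
  · rw [← card_range (min (-n).toNat k)]
    congr 1
    ext i
    have := hpos i
    simp only [mem_filter, mem_range]
    omega

lemma rowsReaching_eq_add (n : ℤ) :
    rowsReaching k r n = rowsReaching k r (n + 1) + #{i ∈ range k | (r i : ℤ) - i = n + 1} :=
  card_filter_lt_eq_card_filter_succ_lt_add _ _ n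

lemma rowsReaching_le (n : ℤ) : rowsReaching k r n ≤ k :=
  (card_filter_le _ _).trans_eq (card_range k)

theorem isOneAdmissible_diagCount (hr : AntitoneOn r (Set.Iio k)) (hpos : ∀ i < k, 0 < r i) :
    IsOneAdmissible (diagCount k r) := by
  have hjump (c : ℤ) : #{i ∈ range k | (r i : ℤ) - i = c} ≤ 1 :=
    card_filter_eq_le_one (by rw [coe_range]; exact hr.strictAntiOn_sub_self.injOn) c
  have hsplit := diagCount_add_min_eq_rowsReaching hpos
  intro n
  constructor
  · have := rowsReaching_eq_add (k := k) (r := r) n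
    have := hsplit n
    have := hsplit (n + 1)
    have := hjump (n + 1)
    omega
  · have := rowsReaching_eq_add (k := k) (r := r) (-n - 1)
    rw [sub_add_cancel] at this
    have := hsplit (-n)
    have := hsplit (-n - 1)
    have := hjump (-n)
    have := rowsReaching_le (k := k) (r := r) (-n - 1)
    omega

theorem finsum_diagCount : ∑ᶠ n, diagCount k r n = ∑ i ∈ range k, r i := by
  have hrow (n : ℤ) :
      diagCount k r n = #{i ∈ range k | n ∈ Ico (-((i : ℕ) : ℤ)) ((r i : ℤ) - i)} := by
    rw [diagCount]
    congr 1
    exact filter_congr fun i _ => by rw [mem_Ico]; omega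
  simp_rw [hrow, finsum_card_filter_mem, Int.card_Ico, sub_neg_eq_add, sub_add_cancel,
    Int.toNat_natCast]

end DiagonalCount

namespace Nat.Partition

variable {a : ℕ} (P : Nat.Partition a)

lemma sortedGE_sort_reverse : (P.parts.sort (· ≤ ·)).reverse.SortedGE :=
  (Multiset.pairwise_sort _ _).sortedLE.reverse

lemma pos_getD_sort_reverse {i : ℕ} (hi : i < (P.parts.sort (· ≤ ·)).reverse.length) :
    0 < (P.parts.sort (· ≤ ·)).reverse.getD i 0 := by
  refine P.parts_pos ?_
  rw [List.getD_eq_getElem _ _ hi, ← Multiset.mem_sort (· ≤ ·), ← List.mem_reverse]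
  exact List.getElem_mem hi

lemma sum_sort_reverse : (P.parts.sort (· ≤ ·)).reverse.sum = a := by
  rw [List.sum_reverse, ← Multiset.sum_coe, Multiset.sort_eq, P.parts_sum]

end Nat.Partition

/-- The diagonal-length sequence of a partition of `a` is 1-admissible with
total sum `a`. -/
theorem diagSeq_one_admissible {a : ℕ} (P : Nat.Partition a) :
    IsOneAdmissible (diagSeq P) ∧ (∑ᶠ n : ℤ, diagSeq P n) = a := by
  set L := (P.parts.sort (· ≤ ·)).reverse
  have hdiag : diagSeq P = diagCount L.length (L.getD · 0) := rfl
  rw [hdiag]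
  refine ⟨isOneAdmissible_diagCount (P.sortedGE_sort_reverse.antitoneOn_getD 0)
    fun _ => P.pos_getD_sort_reverse, ?_⟩
  rw [finsum_diagCount, L.sum_range_getD, P.sum_sort_reverse]
end
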